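/- Let u ∈ Γ* be reduced, and let S = {v ∈ Γ* : u ≡ p v p̄ for some p ∈ Γ*}. Then S is nonempty, any element ũ ∈ S of minimal length admits no factorization ũ ≡ a w ā with a ∈ Γ and w ∈ Γ*, and any two elements of S of minimal length are trace equivalent (so the minimal ũ with u ≡ p ũ p̄ is unique up to ≡). -/

import Mathlib

/-!
A cyclic step `x ≡ a y ā` shortens a word by two letters and keeps it in `S`, so a shortest
element of `S` admits none. Cyclic steps on trace classes have the diamond property: if
`x ≡ a y ā ≡ b z b̄` with `a ≠ b`, then `a` and `b` are independent, and `y ≡ b m b̄`,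
`z ≡ a n ā` with `m ≡ n`. By Church–Rosser, the irreducible classes reachable from `u`, which
include those of all shortest elements of `S`, coincide. The trace combinatorics rests on the
projection lemma: `x ≡ y` iff `x` and `y` have the same projection onto every pair of dependent
nodes.
-/


/-- The set of commutator relators defining a graph product. -/
def gpRels {L : Type} (I : L → L → Prop) (G : L → Type) [∀ α, Group (G α)] :
    Set (Monoid.CoprodI G) :=
  {x | ∃ (α β : L) (g : G α) (h : G β), I α β ∧
    x = Monoid.CoprodI.of g * Monoid.CoprodI.of h *
        (Monoid.CoprodI.of g)⁻¹ * (Monoid.CoprodI.of h)⁻¹}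

/-- The graph product of the groups `G α` over the independence relation `I`. -/
def GP {L : Type} (I : L → L → Prop) (G : L → Type) [∀ α, Group (G α)] : Type :=
  Monoid.CoprodI G ⧸ Subgroup.normalClosure (gpRels I G)

instance {L : Type} (I : L → L → Prop) (G : L → Type) [∀ α, Group (G α)] :
    Group (GP I G) := QuotientGroup.Quotient.group _

/-- The canonical homomorphism of a node group into the graph product. -/
def gpOf {L : Type} (I : L → L → Prop) (G : L → Type) [∀ α, Group (G α)] (α : L) :
    G α →* GP I G :=
  (QuotientGroup.mk' _).comp Monoid.CoprodI.of

/-- A letter: a nontrivial element of one of the node groups. -/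
abbrev Letter (L : Type) (G : L → Type) [∀ α, Group (G α)] : Type :=
  Σ α : L, {g : G α // g ≠ 1}

variable {L : Type} (I : L → L → Prop) (G : L → Type) [∀ α, Group (G α)]

/-- The element of the graph product represented by a word. -/
def evalWord (w : List (Letter L G)) : GP I G :=
  (w.map fun l => gpOf I G l.1 l.2.1).prod

/-- One elementary commutation step between trace-equivalent words. -/
inductive TraceStep : List (Letter L G) → List (Letter L G) → Prop
  | swap (u v : List (Letter L G)) (a b : Letter L G) (h : I a.1 b.1) :
      TraceStep (u ++ a :: b :: v) (u ++ b :: a :: v)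

/-- Trace equivalence: the congruence generated by commuting independent letters. -/
def TraceEquiv : List (Letter L G) → List (Letter L G) → Prop :=
  Relation.EqvGen (TraceStep I G)

/-- `IndepWord I G β u` means every letter of `u` is independent of `β`,
i.e. `u ∈ I(β)`. -/
def IndepWord (β : L) (u : List (Letter L G)) : Prop := ∀ c ∈ u, I c.1 β

/-- A word is reduced if it contains no factor `b u b'` with `b, b' ∈ Γ_β`
and `u ∈ I(β)`. -/
def Reduced (w : List (Letter L G)) : Prop :=
  ¬ ∃ (β : L) (b b' : {g : G β // g ≠ 1}) (x u y : List (Letter L G)),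
      w = x ++ (⟨β, b⟩ : Letter L G) :: (u ++ (⟨β, b'⟩ : Letter L G) :: y) ∧
      IndepWord I G β u

/-- `|w|_α` : number of letters of `w` in `Γ_α`. -/
noncomputable def countAlpha (α : L) (w : List (Letter L G)) : ℕ :=
  (w.filter fun l => Classical.propDecidable (l.1 = α) |>.decide).length

/-- The alphabet `al(w)` of a word. -/
def alph (w : List (Letter L G)) : Set L := {α | ∃ l ∈ w, l.1 = α}

/-- A reduced word is cyclically reduced if it has no factorization `≡ a v a'`
with `a, a'` letters from the same node group. -/
def IsCyclicallyReduced (w : List (Letter L G)) : Prop :=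
  Reduced I G w ∧
  ¬ ∃ (α : L) (a a' : {g : G α // g ≠ 1}) (v : List (Letter L G)),
      TraceEquiv I G w ((⟨α, a⟩ : Letter L G) :: (v ++ [(⟨α, a'⟩ : Letter L G)]))

/-- Words `u` and `v` are transposed if `u ≡ r s` and `v ≡ s r`. -/
def Transposed (u v : List (Letter L G)) : Prop :=
  ∃ r s : List (Letter L G), TraceEquiv I G u (r ++ s) ∧ TraceEquiv I G v (s ++ r)

/-- `u ≈ v` : the reflexive-transitive closure of transposition. -/
def TransClosure : List (Letter L G) → List (Letter L G) → Prop :=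
  Relation.ReflTransGen (Transposed I G)

/-- The formal inverse of a letter. -/
def letterInv (l : Letter L G) : Letter L G :=
  ⟨l.1, ⟨(l.2 : G l.1)⁻¹, inv_ne_one.mpr l.2.2⟩⟩

/-- The formal inverse `p̄` of a word `p`. -/
def wordInv (w : List (Letter L G)) : List (Letter L G) :=
  (w.map (letterInv G)).reverse

/-- The dependence graph on `L`: distinct nodes are adjacent iff not independent. -/
def depGraph : SimpleGraph L where
  Adj a b := a ≠ b ∧ ¬ I a b ∧ ¬ I b a
  symm := by
    constructor
    intro a b ⟨h1, h2, h3⟩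
    exact ⟨h1.symm, h3, h2⟩
  loopless := by constructor; intro a ⟨h1, _⟩; exact h1 rfl

/-- A word is connected if its alphabet induces a connected subgraph of the
dependence graph. -/
def ConnectedWord (w : List (Letter L G)) : Prop :=
  ((depGraph I).induce (alph G w)).Connected

/-- A word `w` is `α`-reduced if every word with fewer letters from `Γ_α`
represents a different element of the graph product. -/
def AlphaReduced (α : L) (w : List (Letter L G)) : Prop :=
  ∀ w' : List (Letter L G), countAlpha G α w' < countAlpha G α w →
    evalWord I G w' ≠ evalWord I G w

section TraceEquivalence

variable {I G}

namespace TraceEquiv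

theorem refl (x : List (Letter L G)) : TraceEquiv I G x x := Relation.EqvGen.refl x

theorem symm {x y : List (Letter L G)} (h : TraceEquiv I G x y) : TraceEquiv I G y x :=
  Relation.EqvGen.symm _ _ h

theorem trans {x y z : List (Letter L G)} (h : TraceEquiv I G x y) (h' : TraceEquiv I G y z) :
    TraceEquiv I G x z :=
  Relation.EqvGen.trans _ _ _ h h'

theorem swap (u v : List (Letter L G)) {a b : Letter L G} (h : I a.1 b.1) :
    TraceEquiv I G (u ++ a :: b :: v) (u ++ b :: a :: v) :=
  Relation.EqvGen.rel _ _ (TraceStep.swap u v a b h)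

theorem map {f : List (Letter L G) → List (Letter L G)}
    (hf : ∀ x y, TraceStep I G x y → TraceEquiv I G (f x) (f y)) {x y : List (Letter L G)}
    (h : TraceEquiv I G x y) : TraceEquiv I G (f x) (f y) := by
  induction h with
  | rel x y hs => exact hf x y hs
  | refl x => exact refl _
  | symm _ _ _ ih => exact ih.symm
  | trans _ _ _ _ _ ih₁ ih₂ => exact ih₁.trans ih₂

theorem append_append (l r : List (Letter L G)) {x y : List (Letter L G)}
    (h : TraceEquiv I G x y) : TraceEquiv I G (l ++ x ++ r) (l ++ y ++ r) := by
  refine map (f := fun w => l ++ w ++ r) (fun _ _ hs => ?_) h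
  obtain ⟨u, v, a, b, hab⟩ := hs
  simpa using swap (l ++ u) (v ++ r) hab

theorem cons (c : Letter L G) {x y : List (Letter L G)} (h : TraceEquiv I G x y) :
    TraceEquiv I G (c :: x) (c :: y) := by
  simpa using append_append [c] [] h

theorem reverse (hsym : ∀ α β, I α β → I β α) {x y : List (Letter L G)}
    (h : TraceEquiv I G x y) : TraceEquiv I G x.reverse y.reverse := by
  refine map (f := List.reverse) (fun _ _ hs => ?_) h
  obtain ⟨u, v, a, b, hab⟩ := hs
  simpa using swap v.reverse u.reverse (hsym _ _ hab)

theorem length_eq {x y : List (Letter L G)} (h : TraceEquiv I G x y) : x.length = y.length := by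
  induction h with
  | rel x y hs => obtain ⟨⟩ := hs; simp
  | refl x => rfl
  | symm _ _ _ ih => exact ih.symm
  | trans _ _ _ _ _ ih₁ ih₂ => exact ih₁.trans ih₂

end TraceEquiv

open Classical in
noncomputable def projOn (s : Set L) (w : List (Letter L G)) : List (Letter L G) :=
  w.filter fun l => l.1 ∈ s

@[simp]
theorem projOn_nil (s : Set L) : projOn s ([] : List (Letter L G)) = [] := rfl

theorem projOn_append (s : Set L) (x y : List (Letter L G)) :
    projOn s (x ++ y) = projOn s x ++ projOn s y :=
  List.filter_append x y

theorem projOn_cons_of_mem {s : Set L} {c : Letter L G} (hc : c.1 ∈ s) (w : List (Letter L G)) :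
    projOn s (c :: w) = c :: projOn s w := by
  simp [projOn, hc]

theorem projOn_cons_of_notMem {s : Set L} {c : Letter L G} (hc : c.1 ∉ s)
    (w : List (Letter L G)) : projOn s (c :: w) = projOn s w := by
  simp [projOn, hc]

theorem projOn_reverse (s : Set L) (w : List (Letter L G)) :
    projOn s w.reverse = (projOn s w).reverse :=
  List.filter_reverse

theorem projOn_eq_of_traceEquiv {s : Set L} (hs : ∀ α ∈ s, ∀ β ∈ s, ¬ I α β)
    {x y : List (Letter L G)} (h : TraceEquiv I G x y) : projOn s x = projOn s y := by
  induction h with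
  | rel x y hs' =>
    obtain ⟨u, v, a, b, hab⟩ := hs'
    simp only [projOn_append]
    congr 1
    by_cases ha : a.1 ∈ s <;> by_cases hb : b.1 ∈ s
    · exact absurd hab (hs _ ha _ hb)
    all_goals simp [projOn_cons_of_mem, projOn_cons_of_notMem, ha, hb]
  | refl x => rfl
  | symm _ _ _ ih => exact ih.symm
  | trans _ _ _ _ _ ih₁ ih₂ => exact ih₁.trans ih₂

theorem pairwise_not_indep_pair (hirr : ∀ α, ¬ I α α) (hsym : ∀ α β, I α β → I β α)
    {γ δ : L} (h : ¬ I γ δ) : ∀ α ∈ ({γ, δ} : Set L), ∀ β ∈ ({γ, δ} : Set L), ¬ I α β := by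
  simp only [Set.mem_insert_iff, Set.mem_singleton_iff]
  rintro α (rfl | rfl) β (rfl | rfl)
  exacts [hirr _, h, fun h' => h (hsym _ _ h'), hirr _]

theorem projOn_pair_eq_of_traceEquiv (hirr : ∀ α, ¬ I α α) (hsym : ∀ α β, I α β → I β α)
    {γ δ : L} (hγδ : ¬ I γ δ) {x y : List (Letter L G)} (h : TraceEquiv I G x y) :
    projOn {γ, δ} x = projOn {γ, δ} y :=
  projOn_eq_of_traceEquiv (pairwise_not_indep_pair hirr hsym hγδ) h

theorem eq_of_traceEquiv_cons_cons (hirr : ∀ α, ¬ I α α) (hsym : ∀ α β, I α β → I β α)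
    {a b : Letter L G} {x y : List (Letter L G)} (hab : ¬ I a.1 b.1)
    (h : TraceEquiv I G (a :: x) (b :: y)) : a = b := by
  have := projOn_pair_eq_of_traceEquiv hirr hsym hab h
  rw [projOn_cons_of_mem (by simp), projOn_cons_of_mem (by simp)] at this
  exact List.head_eq_of_cons_eq this

theorem exists_traceEquiv_cons_of_projOn (hirr : ∀ α, ¬ I α α) (hsym : ∀ α β, I α β → I β α)
    {b : Letter L G} {x : List (Letter L G)}
    (h : ∀ δ, ¬ I b.1 δ → ∃ t, projOn {b.1, δ} x = b :: t) :
    ∃ z, TraceEquiv I G x (b :: z) := by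
  induction x with
  | nil =>
    obtain ⟨t, ht⟩ := h b.1 (hirr _)
    simp at ht
  | cons c x ih =>
    by_cases hcb : c.1 = b.1
    · obtain ⟨t, ht⟩ := h b.1 (hirr _)
      rw [projOn_cons_of_mem (by simp [hcb])] at ht
      obtain rfl := List.head_eq_of_cons_eq ht
      exact ⟨x, .refl _⟩
    · have hI : I b.1 c.1 := by
        by_contra hI
        obtain ⟨t, ht⟩ := h c.1 hI
        rw [projOn_cons_of_mem (by simp)] at ht
        exact hcb (congrArg Sigma.fst (List.head_eq_of_cons_eq ht))
      obtain ⟨z, hz⟩ := ih fun δ hδ => by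
        have hc : c.1 ∉ ({b.1, δ} : Set L) := by
          rintro (hc | hc)
          exacts [hcb hc, hδ (hc ▸ hI)]
        simpa [projOn_cons_of_notMem hc] using h δ hδ
      exact ⟨c :: z, (hz.cons c).trans (TraceEquiv.swap [] z (hsym _ _ hI))⟩

theorem exists_traceEquiv_concat_of_projOn (hirr : ∀ α, ¬ I α α)
    (hsym : ∀ α β, I α β → I β α) {e : Letter L G} {x : List (Letter L G)}
    (h : ∀ δ, ¬ I e.1 δ → ∃ t, projOn {e.1, δ} x = t ++ [e]) :
    ∃ m, TraceEquiv I G x (m ++ [e]) := by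
  obtain ⟨z, hz⟩ := exists_traceEquiv_cons_of_projOn hirr hsym (x := x.reverse) fun δ hδ => by
    obtain ⟨t, ht⟩ := h δ hδ
    exact ⟨t.reverse, by simp [projOn_reverse, ht]⟩
  exact ⟨z.reverse, by simpa using hz.reverse hsym⟩

theorem traceEquiv_of_projOn_eq (hirr : ∀ α, ¬ I α α) (hsym : ∀ α β, I α β → I β α)
    {x y : List (Letter L G)}
    (h : ∀ γ δ, ¬ I γ δ → projOn {γ, δ} x = projOn {γ, δ} y) : TraceEquiv I G x y := by
  induction x generalizing y with
  | nil =>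
    cases y with
    | nil => exact .refl _
    | cons c y => simpa [projOn_cons_of_mem] using h c.1 c.1 (hirr _)
  | cons c x ih =>
    obtain ⟨z, hz⟩ := exists_traceEquiv_cons_of_projOn hirr hsym (b := c) (x := y)
      fun δ hδ => ⟨projOn {c.1, δ} x, by rw [← h _ _ hδ, projOn_cons_of_mem (by simp)]⟩
    refine ((ih fun γ δ hγδ => ?_).cons c).trans hz.symm
    have := (h γ δ hγδ).trans (projOn_pair_eq_of_traceEquiv hirr hsym hγδ hz)
    by_cases hc : c.1 ∈ ({γ, δ} : Set L)
    · simpa [projOn_cons_of_mem hc] using this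
    · simpa [projOn_cons_of_notMem hc] using this

theorem traceEquiv_iff_projOn_eq (hirr : ∀ α, ¬ I α α) (hsym : ∀ α β, I α β → I β α)
    {x y : List (Letter L G)} :
    TraceEquiv I G x y ↔ ∀ γ δ, ¬ I γ δ → projOn {γ, δ} x = projOn {γ, δ} y :=
  ⟨fun h _ _ hγδ => projOn_pair_eq_of_traceEquiv hirr hsym hγδ h,
    traceEquiv_of_projOn_eq hirr hsym⟩

theorem TraceEquiv.of_append_left (hirr : ∀ α, ¬ I α α) (hsym : ∀ α β, I α β → I β α)
    {l x y : List (Letter L G)} (h : TraceEquiv I G (l ++ x) (l ++ y)) : TraceEquiv I G x y := by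
  rw [traceEquiv_iff_projOn_eq hirr hsym] at h ⊢
  intro γ δ hγδ
  simpa [projOn_append] using h γ δ hγδ

theorem TraceEquiv.of_append_right (hirr : ∀ α, ¬ I α α) (hsym : ∀ α β, I α β → I β α)
    {r x y : List (Letter L G)} (h : TraceEquiv I G (x ++ r) (y ++ r)) : TraceEquiv I G x y := by
  rw [traceEquiv_iff_projOn_eq hirr hsym] at h ⊢
  intro γ δ hγδ
  simpa [projOn_append] using h γ δ hγδ

end TraceEquivalence

def CyclicStep (x y : List (Letter L G)) : Prop :=
  ∃ a : Letter L G, TraceEquiv I G x (a :: (y ++ [letterInv G a]))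

def traceSetoid : Setoid (List (Letter L G)) :=
  ⟨TraceEquiv I G, Relation.EqvGen.is_equivalence _⟩

section CyclicReduction

variable {I G}

@[simp]
theorem letterInv_fst (a : Letter L G) : (letterInv G a).1 = a.1 := rfl

theorem wordInv_cons (a : Letter L G) (p : List (Letter L G)) :
    wordInv G (a :: p) = wordInv G p ++ [letterInv G a] := by
  simp [wordInv]

theorem wordInv_concat (p : List (Letter L G)) (a : Letter L G) :
    wordInv G (p ++ [a]) = letterInv G a :: wordInv G p := by
  simp [wordInv]

theorem exists_traceEquiv_cons_concat_of_projOn (hirr : ∀ α, ¬ I α α)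
    (hsym : ∀ α β, I α β → I β α) {b e : Letter L G} (he : e.1 = b.1) {x : List (Letter L G)}
    (h : ∀ δ, ¬ I b.1 δ → ∃ t, projOn {b.1, δ} x = b :: (t ++ [e])) :
    ∃ m, TraceEquiv I G x (b :: (m ++ [e])) := by
  obtain ⟨z, hz⟩ := exists_traceEquiv_cons_of_projOn hirr hsym (x := x) fun δ hδ =>
    (h δ hδ).elim fun t ht => ⟨t ++ [e], ht⟩
  obtain ⟨m, hm⟩ := exists_traceEquiv_concat_of_projOn hirr hsym (e := e) (x := z) fun δ hδ => by
    rw [he] at hδ ⊢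
    obtain ⟨t, ht⟩ := h δ hδ
    have := projOn_pair_eq_of_traceEquiv hirr hsym hδ hz
    rw [ht, projOn_cons_of_mem (by simp)] at this
    exact ⟨t, (List.cons_eq_cons.1 this).2.symm⟩
  exact ⟨m, hz.trans (hm.cons b)⟩

theorem exists_traceEquiv_cons_concat_of_indep (hirr : ∀ α, ¬ I α α)
    (hsym : ∀ α β, I α β → I β α) {a b : Letter L G} {w v : List (Letter L G)}
    (hab : I a.1 b.1)
    (h : TraceEquiv I G (a :: (w ++ [letterInv G a])) (b :: (v ++ [letterInv G b]))) :
    ∃ m, TraceEquiv I G w (b :: (m ++ [letterInv G b])) := by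
  refine exists_traceEquiv_cons_concat_of_projOn hirr hsym (letterInv_fst b) fun δ hδ =>
    ⟨projOn {b.1, δ} v, ?_⟩
  have ha : a.1 ∉ ({b.1, δ} : Set L) := by
    rintro (ha | ha)
    · exact hirr _ (ha ▸ hab)
    · exact hδ (ha ▸ hsym _ _ hab)
  have := projOn_pair_eq_of_traceEquiv hirr hsym hδ h
  simpa [projOn_append, projOn_cons_of_notMem ha, projOn_cons_of_notMem (c := letterInv G a) ha,
    projOn_cons_of_mem (s := {b.1, δ}) (c := b) (by simp),
    projOn_cons_of_mem (s := {b.1, δ}) (c := letterInv G b) (by simp)] using this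

theorem CyclicStep.length_eq {x y : List (Letter L G)} (h : CyclicStep I G x y) :
    x.length = y.length + 2 := by
  obtain ⟨a, ha⟩ := h
  simpa using ha.length_eq

theorem CyclicStep.congr {x x' y y' : List (Letter L G)} (hx : TraceEquiv I G x x')
    (hy : TraceEquiv I G y y') (h : CyclicStep I G x y) : CyclicStep I G x' y' := by
  obtain ⟨a, ha⟩ := h
  exact ⟨a, hx.symm.trans (ha.trans (by simpa using hy.append_append [a] [letterInv G a]))⟩

theorem CyclicStep.exists_conj {u v w p : List (Letter L G)}
    (hv : TraceEquiv I G u (p ++ v ++ wordInv G p)) (h : CyclicStep I G v w) :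
    ∃ q, TraceEquiv I G u (q ++ w ++ wordInv G q) := by
  obtain ⟨a, ha⟩ := h
  refine ⟨p ++ [a], hv.trans ?_⟩
  simpa [wordInv_concat] using ha.append_append p (wordInv G p)

theorem CyclicStep.diamond (hirr : ∀ α, ¬ I α α) (hsym : ∀ α β, I α β → I β α)
    {x y z : List (Letter L G)} (hy : CyclicStep I G x y) (hz : CyclicStep I G x z) :
    TraceEquiv I G y z ∨
      ∃ m n, CyclicStep I G y m ∧ CyclicStep I G z n ∧ TraceEquiv I G m n := by
  obtain ⟨a, ha⟩ := hy
  obtain ⟨b, hb⟩ := hz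
  have h := ha.symm.trans hb
  by_cases hab : a = b
  · subst hab
    exact .inl ((h.of_append_left (l := [a]) hirr hsym).of_append_right hirr hsym)
  have hI : I a.1 b.1 := by
    by_contra hI
    exact hab (eq_of_traceEquiv_cons_cons hirr hsym hI h)
  obtain ⟨m, hm⟩ := exists_traceEquiv_cons_concat_of_indep hirr hsym hI h
  obtain ⟨n, hn⟩ := exists_traceEquiv_cons_concat_of_indep hirr hsym (hsym _ _ hI) h.symm
  refine .inr ⟨m, n, ⟨b, hm⟩, ⟨a, hn⟩, ?_⟩
  -- `x ≡ a b m b̄ ā ≡ b a n ā b̄`, and the two outer pairs of letters commute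
  have hm' : TraceEquiv I G (a :: (y ++ [letterInv G a]))
      ([a, b] ++ m ++ [letterInv G b, letterInv G a]) := by
    simpa using hm.append_append [a] [letterInv G a]
  have hn' : TraceEquiv I G (b :: (z ++ [letterInv G b]))
      ([a, b] ++ n ++ [letterInv G b, letterInv G a]) := by
    have hn'' : TraceEquiv I G (b :: (z ++ [letterInv G b]))
        ([b, a] ++ n ++ [letterInv G a, letterInv G b]) := by
      simpa using hn.append_append [b] [letterInv G b]
    refine hn''.trans ((TraceEquiv.swap [] _ (hsym _ _ hI)).trans ?_)
    simpa using TraceEquiv.swap (I := I) ([a, b] ++ n) [] (a := letterInv G a)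
      (b := letterInv G b) hI
  exact ((hm'.symm.trans (h.trans hn')).of_append_right hirr hsym).of_append_left hirr hsym

end CyclicReduction

def CyclicStepTrace : Quotient (traceSetoid I G) → Quotient (traceSetoid I G) → Prop :=
  Quotient.lift₂ (CyclicStep I G) fun _ _ _ _ hx hy =>
    propext ⟨CyclicStep.congr hx hy, CyclicStep.congr (TraceEquiv.symm hx) (TraceEquiv.symm hy)⟩

section Confluence

variable {I G}

theorem cyclicStepTrace_diamond (hirr : ∀ α, ¬ I α α) (hsym : ∀ α β, I α β → I β α)
    (X Y Z : Quotient (traceSetoid I G)) (hY : CyclicStepTrace I G X Y)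
    (hZ : CyclicStepTrace I G X Z) :
    ∃ W, Relation.ReflGen (CyclicStepTrace I G) Y W ∧
      Relation.ReflTransGen (CyclicStepTrace I G) Z W := by
  induction X using Quotient.inductionOn
  induction Y using Quotient.inductionOn with | h y => ?_
  induction Z using Quotient.inductionOn with | h z => ?_
  rcases CyclicStep.diamond hirr hsym hY hZ with hyz | ⟨m, n, hm, hn, hmn⟩
  · exact ⟨Quotient.mk _ z, by rw [Quotient.sound (s := traceSetoid I G) hyz], .refl⟩
  · refine ⟨Quotient.mk _ m, .single hm, .single ?_⟩
    rw [Quotient.sound (s := traceSetoid I G) hmn]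
    exact hn

theorem reflTransGen_cyclicStepTrace_of_traceEquiv {x v : List (Letter L G)} (p : List (Letter L G))
    (h : TraceEquiv I G x (p ++ v ++ wordInv G p)) :
    Relation.ReflTransGen (CyclicStepTrace I G) (Quotient.mk (traceSetoid I G) x)
      (Quotient.mk (traceSetoid I G) v) := by
  induction p generalizing x with
  | nil =>
    have h : TraceEquiv I G x v := by simpa [wordInv] using h
    rw [Quotient.sound (s := traceSetoid I G) h]
  | cons a p ih =>
    refine .head (b := Quotient.mk _ (p ++ v ++ wordInv G p)) ⟨a, ?_⟩ (ih (.refl _))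
    simpa [wordInv_cons] using h

theorem traceEquiv_of_conj_of_irreducible (hirr : ∀ α, ¬ I α α) (hsym : ∀ α β, I α β → I β α)
    {u v₁ v₂ p₁ p₂ : List (Letter L G)} (h₁ : TraceEquiv I G u (p₁ ++ v₁ ++ wordInv G p₁))
    (h₂ : TraceEquiv I G u (p₂ ++ v₂ ++ wordInv G p₂)) (hv₁ : ∀ w, ¬ CyclicStep I G v₁ w)
    (hv₂ : ∀ w, ¬ CyclicStep I G v₂ w) : TraceEquiv I G v₁ v₂ := by
  have normal : ∀ {v}, (∀ w, ¬ CyclicStep I G v w) → ∀ {W},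
      Relation.ReflTransGen (CyclicStepTrace I G) (Quotient.mk _ v) W →
        W = Quotient.mk (traceSetoid I G) v := by
    intro v hv W hW
    rcases hW.cases_head with hW | ⟨Y, hY, -⟩
    · exact hW.symm
    · induction Y using Quotient.inductionOn
      exact absurd hY (hv _)
  obtain ⟨W, hW₁, hW₂⟩ := Relation.church_rosser (cyclicStepTrace_diamond hirr hsym)
    (reflTransGen_cyclicStepTrace_of_traceEquiv p₁ h₁)
    (reflTransGen_cyclicStepTrace_of_traceEquiv p₂ h₂)
  exact Quotient.exact ((normal hv₁ hW₁).symm.trans (normal hv₂ hW₂))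

end Confluence

theorem cyclic_core_exists_and_unique_general
    {L : Type} (I : L → L → Prop) (G : L → Type) [∀ α, Group (G α)]
    (hirr : ∀ α, ¬ I α α) (hsym : ∀ α β, I α β → I β α)
    (u : List (Letter L G))
    (S : Set (List (Letter L G)))
    (hS : S = {v | ∃ p : List (Letter L G),
        TraceEquiv I G u (p ++ v ++ wordInv G p)}) :
    S.Nonempty ∧
    (∀ ut ∈ S, (∀ v ∈ S, ut.length ≤ v.length) →
      ¬ ∃ (a : Letter L G) (w : List (Letter L G)),
          TraceEquiv I G ut (a :: (w ++ [letterInv G a]))) ∧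
    (∀ u₁ ∈ S, ∀ u₂ ∈ S, (∀ v ∈ S, u₁.length ≤ v.length) →
      (∀ v ∈ S, u₂.length ≤ v.length) → TraceEquiv I G u₁ u₂) := by
  have irreducible : ∀ v ∈ S, (∀ w ∈ S, v.length ≤ w.length) → ∀ w, ¬ CyclicStep I G v w := by
    subst hS
    rintro v ⟨p, hp⟩ hmin w hw
    have := hmin w (hw.exists_conj hp)
    have := hw.length_eq
    omega
  subst hS
  refine ⟨⟨u, [], by simpa [wordInv] using .refl u⟩,
    fun v hv hmin ⟨a, w, h⟩ => irreducible v hv hmin w ⟨a, h⟩, ?_⟩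
  rintro u₁ hu₁ u₂ hu₂ hmin₁ hmin₂
  obtain ⟨p₁, hp₁⟩ := hu₁
  obtain ⟨p₂, hp₂⟩ := hu₂
  exact traceEquiv_of_conj_of_irreducible hirr hsym hp₁ hp₂
    (irreducible u₁ ⟨p₁, hp₁⟩ hmin₁) (irreducible u₂ ⟨p₂, hp₂⟩ hmin₂)

theorem cyclic_core_exists_and_unique
    {L : Type} [Finite L] (I : L → L → Prop) (G : L → Type) [∀ α, Group (G α)]
    (hirr : ∀ α, ¬ I α α) (hsym : ∀ α β, I α β → I β α)
    (u : List (Letter L G)) (hu : Reduced I G u)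
    (S : Set (List (Letter L G)))
    (hS : S = {v | ∃ p : List (Letter L G),
        TraceEquiv I G u (p ++ v ++ wordInv G p)}) :
    S.Nonempty ∧
    (∀ ut ∈ S, (∀ v ∈ S, ut.length ≤ v.length) →
      ¬ ∃ (a : Letter L G) (w : List (Letter L G)),
          TraceEquiv I G ut (a :: (w ++ [letterInv G a]))) ∧
    (∀ u₁ ∈ S, ∀ u₂ ∈ S, (∀ v ∈ S, u₁.length ≤ v.length) →
      (∀ v ∈ S, u₂.length ≤ v.length) → TraceEquiv I G u₁ u₂) :=
  cyclic_core_exists_and_unique_general I G hirr hsym u S hS
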